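/- Let r ∈ [0,1) and let n̂, m̂ ∈ ℝ³ be unit vectors. Define the 2×2 density matrices ρ = (1/2)(I + r·(n̂·σ⃗)) and σ = (1/2)(I + r·(m̂·σ⃗)), where σ⃗ = (σ_x, σ_y, σ_z) are the Pauli matrices. Then D(ρ‖σ) = D(σ‖ρ); explicitly, both equal r·sin²(θ/2)·log((1+r)/(1−r)), where θ is the angle between n̂ and m̂ (cos θ = n̂·m̂). -/

import Mathlib

/-- Functional-calculus (spectral) logarithm of a Hermitian matrix:
the eigenvalues are replaced by their (natural) logarithms in a spectral
decomposition; junk value `0` on non-Hermitian input. -/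
noncomputable def matLog {m : Type*} [Fintype m] [DecidableEq m]
    (A : Matrix m m ℂ) : Matrix m m ℂ :=
  if hA : A.IsHermitian then
    (hA.eigenvectorUnitary : Matrix m m ℂ) *
      Matrix.diagonal (fun i => (Real.log (hA.eigenvalues i) : ℂ)) *
      star (hA.eigenvectorUnitary : Matrix m m ℂ)
  else 0

/-- Quantum relative entropy `D(A‖B) = Re tr(A (log A − log B))`. -/
noncomputable def qRelEnt {m : Type*} [Fintype m] [DecidableEq m]
    (A B : Matrix m m ℂ) : ℝ :=
  ((A * (matLog A - matLog B)).trace).re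

/-- The Pauli matrix `σ_x`. -/
def pauliX : Matrix (Fin 2) (Fin 2) ℂ := !![0, 1; 1, 0]

/-- The Pauli matrix `σ_y`. -/
def pauliY : Matrix (Fin 2) (Fin 2) ℂ := !![0, -Complex.I; Complex.I, 0]

/-- The Pauli matrix `σ_z`. -/
def pauliZ : Matrix (Fin 2) (Fin 2) ℂ := !![1, 0; 0, -1]

/-- Bloch-vector contraction `v̂·σ⃗`. -/
noncomputable def blochOp (v : Fin 3 → ℝ) : Matrix (Fin 2) (Fin 2) ℂ :=
  v 0 • pauliX + v 1 • pauliY + v 2 • pauliZ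

/-! Both states are roots of the same quadratic `(X - (1-r)/2)(X - (1+r)/2)`, so on their common
spectrum the logarithm coincides with its secant line through `(1 ± r)/2`. Hence
`log ρ - log σ = β (ρ - σ)` for a single real `β`, and `D(ρ‖σ) = β tr(ρ(ρ - σ))`; the last trace
is `r²(1 - n̂·m̂)/2`, symmetric in `n̂` and `m̂`, and `β r = log((1+r)/(1-r))`. -/

open Polynomial in
lemma spectrum_subset_pair_of_mul_eq_zero {R A : Type*} [Field R] [Ring A] [Algebra R A]
    {a : A} {x y : R} (h : (a - algebraMap R A x) * (a - algebraMap R A y) = 0) :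
    spectrum R a ⊆ {x, y} := by
  intro z hz
  have : Nontrivial A := by
    by_contra hA
    rw [not_nontrivial_iff_subsingleton] at hA
    simp [spectrum.of_subsingleton] at hz
  have hp := spectrum.subset_polynomial_aeval a ((X - C x) * (X - C y)) ⟨z, hz, rfl⟩
  simp only [map_mul, map_sub, aeval_X, aeval_C, h, spectrum.zero_eq, Set.mem_singleton_iff,
    eval_mul, eval_sub, eval_X, eval_C, mul_eq_zero, sub_eq_zero] at hp
  exact hp

lemma cfc_eq_secant_of_spectrum_subset {A : Type*} [Ring A] [StarRing A] [TopologicalSpace A]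
    [Algebra ℝ A] [ContinuousFunctionalCalculus ℝ A IsSelfAdjoint] {a : A} (ha : IsSelfAdjoint a)
    {x y : ℝ} (h : spectrum ℝ a ⊆ {x, y}) (f : ℝ → ℝ) :
    cfc f a = algebraMap ℝ A (f x) + slope f x y • (a - algebraMap ℝ A x) := by
  have hf : (spectrum ℝ a).EqOn f (fun t => f x + slope f x y * (t - x)) := by
    intro t ht
    rcases h ht with rfl | rfl
    · simp
    · dsimp only
      rw [mul_comm, ← smul_eq_mul, sub_smul_slope, vsub_eq_sub, add_sub_cancel]
  rw [cfc_congr hf, cfc_const_add _ _ _, cfc_const_mul _ _ _, cfc_sub _ _, cfc_id' ℝ a,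
    cfc_const x a]

section matLog

variable {k : Type*} [Fintype k] [DecidableEq k]

lemma matLog_eq_cfc {A : Matrix k k ℂ} (hA : A.IsHermitian) : matLog A = cfc Real.log A := by
  rw [matLog, dif_pos hA, hA.cfc_eq, Matrix.IsHermitian.cfc, Unitary.conjStarAlgAut_apply]
  rfl

lemma matLog_sub_matLog_of_spectrum_subset {A B : Matrix k k ℂ} (hA : A.IsHermitian)
    (hB : B.IsHermitian) {x y : ℝ} (hAs : spectrum ℝ A ⊆ {x, y}) (hBs : spectrum ℝ B ⊆ {x, y}) :
    matLog A - matLog B = slope Real.log x y • (A - B) := by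
  rw [matLog_eq_cfc hA, matLog_eq_cfc hB, cfc_eq_secant_of_spectrum_subset hA hAs,
    cfc_eq_secant_of_spectrum_subset hB hBs]
  module

lemma qRelEnt_eq_of_matLog_sub_eq_smul {A B : Matrix k k ℂ} {β : ℝ}
    (h : matLog A - matLog B = β • (A - B)) :
    qRelEnt A B = β * (A * (A - B)).trace.re := by
  rw [qRelEnt, h, Matrix.mul_smul, Matrix.trace_smul, Complex.real_smul, Complex.re_ofReal_mul]

end matLog

noncomputable def qubitState (r : ℝ) (v : Fin 3 → ℝ) : Matrix (Fin 2) (Fin 2) ℂ :=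
  (2⁻¹ : ℝ) • (1 + r • blochOp v)

lemma blochOp_isHermitian (v : Fin 3 → ℝ) : (blochOp v).IsHermitian := by
  ext i j
  fin_cases i <;> fin_cases j <;> simp [blochOp, pauliX, pauliY, pauliZ]

lemma blochOp_mul_self (v : Fin 3 → ℝ) :
    blochOp v * blochOp v = (v 0 ^ 2 + v 1 ^ 2 + v 2 ^ 2 : ℝ) • 1 := by
  ext i j
  fin_cases i <;> fin_cases j <;>
    simp [blochOp, pauliX, pauliY, pauliZ, Matrix.mul_apply, Fin.sum_univ_two] <;> ring_nf <;>
    simp [Complex.I_sq]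

lemma qubitState_isHermitian (r : ℝ) (v : Fin 3 → ℝ) : (qubitState r v).IsHermitian :=
  (IsSelfAdjoint.all _).smul <|
    (IsSelfAdjoint.one _).add <| (IsSelfAdjoint.all r).smul (blochOp_isHermitian v).isSelfAdjoint

lemma qubitState_quadratic (r : ℝ) {v : Fin 3 → ℝ} (hv : v 0 ^ 2 + v 1 ^ 2 + v 2 ^ 2 = 1) :
    (qubitState r v - algebraMap ℝ _ ((1 - r) / 2)) *
      (qubitState r v - algebraMap ℝ _ ((1 + r) / 2)) = 0 := by
  have hB := blochOp_mul_self v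
  rw [hv, one_smul] at hB
  simp only [qubitState, Algebra.algebraMap_eq_smul_one, sub_mul, mul_sub, add_mul, mul_add,
    smul_mul_assoc, mul_smul_comm, one_mul, mul_one, hB, smul_add]
  module

lemma re_trace_qubitState_mul_sub (r : ℝ) {v : Fin 3 → ℝ} (hv : v 0 ^ 2 + v 1 ^ 2 + v 2 ^ 2 = 1)
    (w : Fin 3 → ℝ) :
    (qubitState r v * (qubitState r v - qubitState r w)).trace.re =
      r ^ 2 / 2 * (1 - (v 0 * w 0 + v 1 * w 1 + v 2 * w 2)) := by
  simp [qubitState, blochOp, pauliX, pauliY, pauliZ, Matrix.trace_fin_two, Matrix.mul_apply,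
    Fin.sum_univ_two]
  linear_combination r ^ 2 / 2 * hv

lemma qRelEnt_qubitState (r : ℝ) {v w : Fin 3 → ℝ} (hv : v 0 ^ 2 + v 1 ^ 2 + v 2 ^ 2 = 1)
    (hw : w 0 ^ 2 + w 1 ^ 2 + w 2 ^ 2 = 1) :
    qRelEnt (qubitState r v) (qubitState r w) = slope Real.log ((1 - r) / 2) ((1 + r) / 2) *
      (r ^ 2 / 2 * (1 - (v 0 * w 0 + v 1 * w 1 + v 2 * w 2))) := by
  have hlog := matLog_sub_matLog_of_spectrum_subset (qubitState_isHermitian r v)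
    (qubitState_isHermitian r w) (spectrum_subset_pair_of_mul_eq_zero (qubitState_quadratic r hv))
    (spectrum_subset_pair_of_mul_eq_zero (qubitState_quadratic r hw))
  rw [qRelEnt_eq_of_matLog_sub_eq_smul hlog, re_trace_qubitState_mul_sub r hv]

/-- **Symmetry of the relative entropy for equal-purity qubit states.**
For `ρ = ½(I + r n̂·σ⃗)` and `σ = ½(I + r m̂·σ⃗)` with `r ∈ [0,1)` and unit
vectors `n̂, m̂`, one has `D(ρ‖σ) = D(σ‖ρ)`, and both equal
`r sin²(θ/2) log((1+r)/(1−r))` where `cos θ = n̂·m̂`. -/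
theorem equal_purity_qubit_relEnt_symm
    (r : ℝ) (hr : r ∈ Set.Ico (0 : ℝ) 1)
    (n m : Fin 3 → ℝ)
    (hn : n 0 ^ 2 + n 1 ^ 2 + n 2 ^ 2 = 1)
    (hm : m 0 ^ 2 + m 1 ^ 2 + m 2 ^ 2 = 1)
    (θ : ℝ) (hθ : Real.cos θ = n 0 * m 0 + n 1 * m 1 + n 2 * m 2)
    (ρ σ : Matrix (Fin 2) (Fin 2) ℂ)
    (hρ : ρ = (2⁻¹ : ℝ) • (1 + r • blochOp n))
    (hσ : σ = (2⁻¹ : ℝ) • (1 + r • blochOp m)) :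
    qRelEnt ρ σ = qRelEnt σ ρ ∧
    qRelEnt ρ σ = r * Real.sin (θ / 2) ^ 2 * Real.log ((1 + r) / (1 - r)) := by
  obtain ⟨hr0, hr1⟩ := hr
  obtain rfl : ρ = qubitState r n := hρ
  obtain rfl : σ = qubitState r m := hσ
  have hslope : r * slope Real.log ((1 - r) / 2) ((1 + r) / 2) = Real.log ((1 + r) / (1 - r)) :=
    calc r * slope Real.log ((1 - r) / 2) ((1 + r) / 2)
        = ((1 + r) / 2 - (1 - r) / 2) • slope Real.log ((1 - r) / 2) ((1 + r) / 2) := by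
          rw [smul_eq_mul]; ring
      _ = Real.log ((1 + r) / 2) - Real.log ((1 - r) / 2) := sub_smul_slope _ _ _
      _ = Real.log ((1 + r) / (1 - r)) := by
          rw [← Real.log_div (by positivity) (by linarith)]
          congr 1
          field_simp
  refine ⟨by rw [qRelEnt_qubitState r hn hm, qRelEnt_qubitState r hm hn]; ring, ?_⟩
  rw [qRelEnt_qubitState r hn hm, ← hθ, Real.sin_sq_eq_half_sub, mul_div_cancel₀ θ two_ne_zero,
    ← hslope]
  ring
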